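/- arXiv:2308.04075 — 6 statements merged into one kernel-verified Lean document; each statement's English description precedes it below -/
import Mathlib

section
/- Under the assumptions that g is C¹ on [l,r], strictly positive on (l,r), and satisfies the non-integrability conditions ∫_{w₀}^{l} 1/g = -∞ and ∫_{w₀}^{r} 1/g = +∞, the inverse Φ⁻¹ : ℝ → (l,r) of the Lamperti transform is continuously differentiable with derivative (Φ⁻¹)'(x) = g(Φ⁻¹(x)), and this derivative is uniformly bounded by sup_{y ∈ [l,r]} |g(y)|; in particular Φ⁻¹ is globally Lipschitz continuous with Lipschitz constant sup_{y ∈ [l,r]} |g(y)|. -/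
open MeasureTheory Set Filter Real

/-!
On `(l, r)` the transform `Φ` has derivative `1 / g > 0`, so it is strictly increasing, and so is
its inverse `Ψ`. A strictly increasing map onto an open interval is continuous, hence the inverse
function theorem gives `Ψ' = 1 / Φ' ∘ Ψ = g ∘ Ψ`. As `Ψ` takes values in `[l, r]`, this derivative
is bounded by `sup_{[l, r]} |g|`, and the mean value inequality yields the Lipschitz bound.
-/

theorem hasDerivAt_intervalIntegral_of_continuousOn_Ioo {E : Type*} [NormedAddCommGroup E]
    [NormedSpace ℝ E] [CompleteSpace E] {f : ℝ → E} {l r a x : ℝ}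
    (hf : ContinuousOn f (Ioo l r)) (ha : a ∈ Ioo l r) (hx : x ∈ Ioo l r) :
    HasDerivAt (fun x => ∫ w in a..x, f w) (f x) x :=
  intervalIntegral.integral_hasDerivAt_right
    ((hf.mono (ordConnected_Ioo.uIcc_subset ha hx)).intervalIntegrable)
    (hf.stronglyMeasurableAtFilter isOpen_Ioo x hx)
    (hf.continuousAt (isOpen_Ioo.mem_nhds hx))

theorem strictMonoOn_of_hasDerivAt_pos {s : Set ℝ} (hs : Convex ℝ s) {f f' : ℝ → ℝ}
    (hf : ∀ x ∈ s, HasDerivAt f (f' x) x) (hf' : ∀ x ∈ s, 0 < f' x) : StrictMonoOn f s :=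
  strictMonoOn_of_hasDerivWithinAt_pos hs (fun x hx => (hf x hx).continuousAt.continuousWithinAt)
    (fun x hx => (hf x (interior_subset hx)).hasDerivWithinAt)
    (fun x hx => hf' x (interior_subset hx))

theorem StrictMonoOn.strictMono_of_rightInverse {α β : Type*} [LinearOrder α] [Preorder β]
    {f : α → β} {g : β → α} {s : Set α} (hf : StrictMonoOn f s) (hg : ∀ y, g y ∈ s)
    (hfg : Function.RightInverse g f) : StrictMono g := fun y₁ y₂ h =>
  (hf.lt_iff_lt (hg y₁) (hg y₂)).1 (by rwa [hfg y₁, hfg y₂])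

theorem StrictMono.continuous_of_isOpen_range {α β : Type*} [LinearOrder α] [TopologicalSpace α]
    [OrderTopology α] [LinearOrder β] [TopologicalSpace β] [OrderTopology β] [DenselyOrdered β]
    {f : α → β} (hf : StrictMono f) (h : IsOpen (range f)) : Continuous f :=
  continuous_iff_continuousAt.2 fun a =>
    hf.strictMonoOn univ |>.continuousAt_of_image_mem_nhds univ_mem
      (by rw [image_univ]; exact h.mem_nhds (mem_range_self a))

theorem lipschitzWith_of_hasDerivAt_abs_le {f f' : ℝ → ℝ} {K : ℝ}
    (hf : ∀ x, HasDerivAt f (f' x) x) (hK : ∀ x, |f' x| ≤ K) : LipschitzWith K.toNNReal f :=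
  lipschitzWith_of_nnnorm_deriv_le (fun x => (hf x).differentiableAt) fun x => by
    rw [(hf x).deriv, ← NNReal.coe_le_coe, coe_nnnorm, Real.norm_eq_abs,
      Real.coe_toNNReal K ((abs_nonneg _).trans (hK x))]
    exact hK x

theorem lamperti_inverse_lipschitz_general
    (l r w₀ : ℝ) (hw₀ : w₀ ∈ Set.Ioo l r)
    (g : ℝ → ℝ)
    (hg : ContDiffOn ℝ 1 g (Set.Icc l r))
    (hgpos : ∀ x ∈ Set.Ioo l r, 0 < g x)
    (Φ Ψ : ℝ → ℝ)
    (hΦ : ∀ x, Φ x = ∫ w in w₀..x, 1 / g w)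
    (hΨmem : ∀ y, Ψ y ∈ Set.Ioo l r)
    (hΨΦ : ∀ x ∈ Set.Ioo l r, Ψ (Φ x) = x)
    (hΦΨ : ∀ y, Φ (Ψ y) = y)
    (K : ℝ) (hK : K = sSup ((fun y => |g y|) '' Set.Icc l r)) :
    (∀ y, HasDerivAt Ψ (g (Ψ y)) y) ∧
    Continuous (fun y => g (Ψ y)) ∧
    (∀ y, |g (Ψ y)| ≤ K) ∧
    LipschitzWith (Real.toNNReal K) Ψ := by
  have hgc : ContinuousOn g (Icc l r) := hg.continuousOn
  have hgIoo : ContinuousOn g (Ioo l r) := hgc.mono Ioo_subset_Icc_self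
  have hΦ' : ∀ x ∈ Ioo l r, HasDerivAt Φ (1 / g x) x := fun x hx => by
    rw [funext hΦ]
    exact hasDerivAt_intervalIntegral_of_continuousOn_Ioo
      (continuousOn_const.div hgIoo fun w hw => (hgpos w hw).ne') hw₀ hx
  have hΨmono : StrictMono Ψ :=
    (strictMonoOn_of_hasDerivAt_pos (convex_Ioo l r) hΦ' fun x hx =>
      one_div_pos.2 (hgpos x hx)).strictMono_of_rightInverse hΨmem hΦΨ
  have hrange : range Ψ = Ioo l r :=
    (range_subset_iff.2 hΨmem).antisymm fun x hx => ⟨Φ x, hΨΦ x hx⟩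
  have hΨc : Continuous Ψ := hΨmono.continuous_of_isOpen_range (hrange ▸ isOpen_Ioo)
  have hΨ' : ∀ y, HasDerivAt Ψ (g (Ψ y)) y := fun y => by
    simpa using (hΦ' _ (hΨmem y)).of_local_left_inverse hΨc.continuousAt
      (one_div_ne_zero (hgpos _ (hΨmem y)).ne') (Eventually.of_forall hΦΨ)
  have hbound : ∀ y, |g (Ψ y)| ≤ K := fun y => hK ▸
    le_csSup (isCompact_Icc.bddAbove_image hgc.abs) ⟨Ψ y, Ioo_subset_Icc_self (hΨmem y), rfl⟩
  exact ⟨hΨ', hgc.comp_continuous hΨc fun y => Ioo_subset_Icc_self (hΨmem y), hbound,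
    lipschitzWith_of_hasDerivAt_abs_le hΨ' hbound⟩

/-- The inverse of the Lamperti transform is continuously differentiable
with derivative `g ∘ Φ⁻¹`, uniformly bounded by `sup_{[l,r]} |g|`; in particular it is
globally Lipschitz with that constant. -/
theorem lamperti_inverse_lipschitz
    (l r w₀ : ℝ) (hlr : l < r) (hw₀ : w₀ ∈ Set.Ioo l r)
    (g : ℝ → ℝ)
    (hg : ContDiffOn ℝ 1 g (Set.Icc l r))
    (hgpos : ∀ x ∈ Set.Ioo l r, 0 < g x)
    (Φ Ψ : ℝ → ℝ)
    (hΦ : ∀ x, Φ x = ∫ w in w₀..x, 1 / g w)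
    (hl : Tendsto Φ (nhdsWithin l (Set.Ioo l r)) atBot)
    (hr : Tendsto Φ (nhdsWithin r (Set.Ioo l r)) atTop)
    (hΨmem : ∀ y, Ψ y ∈ Set.Ioo l r)
    (hΨΦ : ∀ x ∈ Set.Ioo l r, Ψ (Φ x) = x)
    (hΦΨ : ∀ y, Φ (Ψ y) = y)
    (K : ℝ) (hK : K = sSup ((fun y => |g y|) '' Set.Icc l r)) :
    (∀ y, HasDerivAt Ψ (g (Ψ y)) y) ∧
    Continuous (fun y => g (Ψ y)) ∧
    (∀ y, |g (Ψ y)| ≤ K) ∧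
    LipschitzWith (Real.toNNReal K) Ψ :=
  lamperti_inverse_lipschitz_general l r w₀ hw₀ g hg hgpos Φ Ψ hΦ hΨmem hΨΦ hΦΨ K hK
end

section
/- Suppose f is C² on [l,r], g is C³ on [l,r] and strictly positive on (l,r) with the non-integrability conditions at l and r, and the limits lim_{x→l⁺} f(x)/g(x) and lim_{x→r⁻} f(x)/g(x) exist and are finite. Then the function H(x) = f(Φ⁻¹(x))/g(Φ⁻¹(x)) − (1/2) g'(Φ⁻¹(x)) − μ is of class C² on ℝ with H+μ, H', and H'' all uniformly bounded on ℝ by a constant independent of μ; in particular, H and H' are globally Lipschitz continuous. -/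
/-!
Since `Φ' = 1/g`, the inverse `Ψ = Φ⁻¹` satisfies `Ψ' = g ∘ Ψ`, hence `(u ∘ Ψ)' = (g u') ∘ Ψ`.
On functions of the form `a + (f/g) b` the operator `u ↦ g u'` acts on the coefficients by
`(a, b) ↦ (g a' + f' b, g b' - g' b)`, because `g (f/g)' = f' - (f/g) g'`; it thus lowers the
smoothness of `a, b` on `[l, r]` by one. As `H + μ = (f/g - g'/2) ∘ Ψ` is of this form with
`C²` coefficients, `H + μ`, `H'` and `H''` are `(a + (f/g) b) ∘ Ψ` with `a, b` continuous
on `[l, r]`. These are bounded because `f/g`, having limits at `l` and `r`, is bounded on `(l, r)`.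
-/

open MeasureTheory Set Filter Real Topology

theorem exists_abs_le_of_continuousOn_Ioo_of_tendsto {l r Ll Lr : ℝ} {u : ℝ → ℝ}
    (hu : ContinuousOn u (Ioo l r)) (hl : Tendsto u (𝓝[>] l) (𝓝 Ll))
    (hr : Tendsto u (𝓝[<] r) (𝓝 Lr)) : ∃ C, ∀ x ∈ Ioo l r, |u x| ≤ C := by
  obtain ⟨C, hC⟩ :=
    isCompact_Icc.exists_bound_of_continuousOn (continuousOn_Icc_extendFrom_Ioo hu hl hr)
  refine ⟨C, fun x hx => ?_⟩
  simpa only [extendFrom_extends hu x hx, Real.norm_eq_abs] using hC x (Ioo_subset_Icc_self hx)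

theorem hasDerivAt_integral_of_continuousOn {E : Type*} [NormedAddCommGroup E]
    [NormedSpace ℝ E] [CompleteSpace E] {u : ℝ → E} {s : Set ℝ} {w₀ x : ℝ}
    (hu : ContinuousOn u s) (hs : IsOpen s) (hsub : uIcc w₀ x ⊆ s) :
    HasDerivAt (fun y => ∫ w in w₀..y, u w) (u x) x := by
  have hx : x ∈ s := hsub right_mem_uIcc
  exact intervalIntegral.integral_hasDerivAt_right ((hu.mono hsub).intervalIntegrable)
    (hu.stronglyMeasurableAtFilter hs x hx) (hu.continuousAt (hs.mem_nhds hx))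

theorem StrictMonoOn.continuous_of_rightInverse {Φ Ψ : ℝ → ℝ} {s : Set ℝ}
    (hΦ : StrictMonoOn Φ s) (hs : IsOpen s) (hΨs : ∀ y, Ψ y ∈ s)
    (hΨΦ : ∀ x ∈ s, Ψ (Φ x) = x) (hΦΨ : ∀ y, Φ (Ψ y) = y) : Continuous Ψ := by
  have hmono : Monotone Ψ := fun a b hab =>
    (hΦ.le_iff_le (hΨs a) (hΨs b)).mp (by rwa [hΦΨ, hΦΨ])
  have hrange : range Ψ = s :=
    Subset.antisymm (range_subset_iff.2 hΨs) fun x hx => ⟨Φ x, hΨΦ x hx⟩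
  refine continuous_iff_continuousAt.2 fun y =>
    continuousAt_of_monotoneOn_of_image_mem_nhds (hmono.monotoneOn univ) univ_mem ?_
  rw [image_univ, hrange]
  exact hs.mem_nhds (hΨs y)

theorem hasDerivAt_rightInverse_of_hasDerivAt_one_div {Φ Ψ g : ℝ → ℝ} {l r : ℝ}
    (hΦ : ∀ x ∈ Ioo l r, HasDerivAt Φ (1 / g x) x) (hg : ∀ x ∈ Ioo l r, 0 < g x)
    (hΨmem : ∀ y, Ψ y ∈ Ioo l r) (hΨΦ : ∀ x ∈ Ioo l r, Ψ (Φ x) = x)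
    (hΦΨ : ∀ y, Φ (Ψ y) = y) (y : ℝ) : HasDerivAt Ψ (g (Ψ y)) y := by
  have hmono : StrictMonoOn Φ (Ioo l r) := by
    refine strictMonoOn_of_deriv_pos (convex_Ioo l r)
      (fun x hx => (hΦ x hx).continuousAt.continuousWithinAt) fun x hx => ?_
    rw [interior_Ioo] at hx
    rw [(hΦ x hx).deriv]
    exact one_div_pos.2 (hg x hx)
  have hcont := hmono.continuous_of_rightInverse isOpen_Ioo hΨmem hΨΦ hΦΨ
  simpa only [one_div, inv_inv] using (hΦ _ (hΨmem y)).of_local_left_inverse hcont.continuousAt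
    (one_div_ne_zero (hg _ (hΨmem y)).ne') (Eventually.of_forall hΦΨ)

theorem hasDerivAt_comp_of_hasDerivAt_div {Ψ g G G₁ : ℝ → ℝ} {y : ℝ}
    (hG : HasDerivAt G (G₁ (Ψ y) / g (Ψ y)) (Ψ y)) (hΨ : HasDerivAt Ψ (g (Ψ y)) y)
    (hg : g (Ψ y) ≠ 0) : HasDerivAt (fun x => G (Ψ x)) (G₁ (Ψ y)) y := by
  have h := hG.comp y hΨ
  rw [div_mul_cancel₀ _ hg] at h
  exact h

theorem contDiff_two_of_hasDerivAt {u u₁ u₂ : ℝ → ℝ} (h₁ : ∀ x, HasDerivAt u (u₁ x) x)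
    (h₂ : ∀ x, HasDerivAt u₁ (u₂ x) x) (hu₂ : Continuous u₂) : ContDiff ℝ 2 u := by
  have hderiv₁ : deriv u = u₁ := funext fun x => (h₁ x).deriv
  have hderiv₂ : deriv u₁ = u₂ := funext fun x => (h₂ x).deriv
  rw [show (2 : WithTop ℕ∞) = 1 + 1 from rfl, contDiff_succ_iff_deriv, hderiv₁,
    contDiff_one_iff_deriv, hderiv₂]
  exact ⟨fun x => (h₁ x).differentiableAt, by simp, fun x => (h₂ x).differentiableAt, hu₂⟩

theorem lipschitzWith_of_hasDerivAt_of_abs_le {u u' : ℝ → ℝ} {C : ℝ}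
    (hu : ∀ x, HasDerivAt u (u' x) x) (hC : ∀ x, |u' x| ≤ C) : LipschitzWith C.toNNReal u := by
  refine lipschitzWith_of_nnnorm_deriv_le (fun x => (hu x).differentiableAt) fun x => ?_
  rw [← NNReal.coe_le_coe, coe_nnnorm, (hu x).deriv, Real.coe_toNNReal']
  exact le_max_of_le_left (hC x)

noncomputable section AddDivMul

variable {l r : ℝ} {f g a b : ℝ → ℝ}

def addDivMul (f g a b : ℝ → ℝ) : ℝ → ℝ := fun x => a x + f x / g x * b x

theorem HasDerivAt.addDivMul {f' g' a' b' x : ℝ} (hf : HasDerivAt f f' x)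
    (hg : HasDerivAt g g' x) (ha : HasDerivAt a a' x) (hb : HasDerivAt b b' x) (hgx : g x ≠ 0) :
    HasDerivAt (addDivMul f g a b)
      ((g x * a' + f' * b x + f x / g x * (g x * b' - g' * b x)) / g x) x := by
  refine (ha.add ((hf.div hg hgx).mul hb)).congr_deriv ?_
  simp only [Pi.div_apply]
  field_simp
  ring

/-- Coefficients of `g · (addDivMul f g a b)'` written as an `addDivMul f g`; the derivatives
are taken within `[l, r]` so that they stay controlled up to the endpoints. -/
def gDerivFst (l r : ℝ) (f g a b : ℝ → ℝ) : ℝ → ℝ :=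
  fun x => g x * derivWithin a (Icc l r) x + derivWithin f (Icc l r) x * b x

def gDerivSnd (l r : ℝ) (g b : ℝ → ℝ) : ℝ → ℝ :=
  fun x => g x * derivWithin b (Icc l r) x - derivWithin g (Icc l r) x * b x

theorem ContDiffOn.hasDerivAt_derivWithin_Icc {n : WithTop ℕ∞} {u : ℝ → ℝ} {x : ℝ}
    (hu : ContDiffOn ℝ n u (Icc l r)) (hn : n ≠ 0) (hx : x ∈ Ioo l r) :
    HasDerivAt u (derivWithin u (Icc l r) x) x := by
  have hK : Icc l r ∈ 𝓝 x := Icc_mem_nhds hx.1 hx.2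
  rw [derivWithin_of_mem_nhds hK]
  exact ((hu.differentiableOn hn x (Ioo_subset_Icc_self hx)).differentiableAt hK).hasDerivAt

theorem hasDerivAt_addDivMul (hf : ContDiffOn ℝ 1 f (Icc l r)) (hg : ContDiffOn ℝ 1 g (Icc l r))
    (ha : ContDiffOn ℝ 1 a (Icc l r)) (hb : ContDiffOn ℝ 1 b (Icc l r)) {x : ℝ}
    (hx : x ∈ Ioo l r) (hgx : g x ≠ 0) :
    HasDerivAt (addDivMul f g a b)
      (addDivMul f g (gDerivFst l r f g a b) (gDerivSnd l r g b) x / g x) x :=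
  (hf.hasDerivAt_derivWithin_Icc one_ne_zero hx).addDivMul
    (hg.hasDerivAt_derivWithin_Icc one_ne_zero hx) (ha.hasDerivAt_derivWithin_Icc one_ne_zero hx)
    (hb.hasDerivAt_derivWithin_Icc one_ne_zero hx) hgx

variable {m n : WithTop ℕ∞}

theorem ContDiffOn.gDerivFst (hlr : l < r) (hmn : m + 1 ≤ n) (hf : ContDiffOn ℝ n f (Icc l r))
    (hg : ContDiffOn ℝ n g (Icc l r)) (ha : ContDiffOn ℝ n a (Icc l r))
    (hb : ContDiffOn ℝ n b (Icc l r)) : ContDiffOn ℝ m (gDerivFst l r f g a b) (Icc l r) := by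
  have hle : m ≤ n := le_trans le_self_add hmn
  exact ((hg.of_le hle).mul (ha.derivWithin (uniqueDiffOn_Icc hlr) hmn)).add
    ((hf.derivWithin (uniqueDiffOn_Icc hlr) hmn).mul (hb.of_le hle))

theorem ContDiffOn.gDerivSnd (hlr : l < r) (hmn : m + 1 ≤ n) (hg : ContDiffOn ℝ n g (Icc l r))
    (hb : ContDiffOn ℝ n b (Icc l r)) : ContDiffOn ℝ m (gDerivSnd l r g b) (Icc l r) := by
  have hle : m ≤ n := le_trans le_self_add hmn
  exact ((hg.of_le hle).mul (hb.derivWithin (uniqueDiffOn_Icc hlr) hmn)).sub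
    ((hg.derivWithin (uniqueDiffOn_Icc hlr) hmn).mul (hb.of_le hle))

theorem exists_abs_addDivMul_le (hq : ∃ C, ∀ x ∈ Ioo l r, |f x / g x| ≤ C)
    (ha : ContinuousOn a (Icc l r)) (hb : ContinuousOn b (Icc l r)) :
    ∃ C, ∀ x ∈ Ioo l r, |addDivMul f g a b x| ≤ C := by
  obtain ⟨Cq, hCq⟩ := hq
  obtain ⟨Ca, hCa⟩ := isCompact_Icc.exists_bound_of_continuousOn ha
  obtain ⟨Cb, hCb⟩ := isCompact_Icc.exists_bound_of_continuousOn hb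
  refine ⟨Ca + Cq * Cb, fun x hx => ?_⟩
  have hxK := Ioo_subset_Icc_self hx
  have hax : |a x| ≤ Ca := hCa x hxK
  have hbx : |b x| ≤ Cb := hCb x hxK
  calc |addDivMul f g a b x| ≤ |a x| + |f x / g x| * |b x| := by
        rw [← abs_mul]; exact abs_add_le _ _
    _ ≤ Ca + Cq * Cb := add_le_add hax
        (mul_le_mul (hCq x hx) hbx (abs_nonneg _) ((abs_nonneg _).trans (hCq x hx)))

theorem ContinuousOn.addDivMul (hf : ContinuousOn f (Ioo l r)) (hg : ContinuousOn g (Ioo l r))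
    (hg0 : ∀ x ∈ Ioo l r, g x ≠ 0) (ha : ContinuousOn a (Icc l r))
    (hb : ContinuousOn b (Icc l r)) : ContinuousOn (addDivMul f g a b) (Ioo l r) :=
  (ha.mono Ioo_subset_Icc_self).add ((hf.div hg hg0).mul (hb.mono Ioo_subset_Icc_self))

end AddDivMul

theorem exists_drift_derivatives {l r : ℝ} {f g : ℝ → ℝ} (hlr : l < r)
    (hf : ContDiffOn ℝ 2 f (Icc l r)) (hg : ContDiffOn ℝ 3 g (Icc l r))
    (hg0 : ∀ x ∈ Ioo l r, g x ≠ 0) (hq : ∃ C, ∀ x ∈ Ioo l r, |f x / g x| ≤ C) :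
    ∃ F F₁ F₂ : ℝ → ℝ, (∀ x ∈ Ioo l r, F x = f x / g x - 1 / 2 * deriv g x) ∧
      (∀ x ∈ Ioo l r, HasDerivAt F (F₁ x / g x) x) ∧
      (∀ x ∈ Ioo l r, HasDerivAt F₁ (F₂ x / g x) x) ∧ ContinuousOn F₂ (Ioo l r) ∧
      ∃ C, ∀ x ∈ Ioo l r, |F x| ≤ C ∧ |F₁ x| ≤ C ∧ |F₂ x| ≤ C := by
  set K := Icc l r
  set a₀ : ℝ → ℝ := fun x => -(1 / 2) * derivWithin g K x
  set b₀ : ℝ → ℝ := fun _ => 1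
  set a₁ := gDerivFst l r f g a₀ b₀
  set b₁ := gDerivSnd l r g b₀
  set a₂ := gDerivFst l r f g a₁ b₁
  set b₂ := gDerivSnd l r g b₁
  have hf₁ : ContDiffOn ℝ 1 f K := hf.of_le (by norm_num)
  have hg₁ : ContDiffOn ℝ 1 g K := hg.of_le (by norm_num)
  have hg₂ : ContDiffOn ℝ 2 g K := hg.of_le (by norm_num)
  have ha₀ : ContDiffOn ℝ 2 a₀ K :=
    contDiffOn_const.mul (hg.derivWithin (uniqueDiffOn_Icc hlr) (by norm_num))
  have hb₀ : ContDiffOn ℝ 2 b₀ K := contDiffOn_const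
  have ha₁ : ContDiffOn ℝ 1 a₁ K := hf.gDerivFst hlr (by norm_num) hg₂ ha₀ hb₀
  have hb₁ : ContDiffOn ℝ 1 b₁ K := hg₂.gDerivSnd hlr (by norm_num) hb₀
  have ha₂ : ContinuousOn a₂ K :=
    (hf₁.gDerivFst (m := 0) hlr (by norm_num) hg₁ ha₁ hb₁).continuousOn
  have hb₂ : ContinuousOn b₂ K :=
    (hg₁.gDerivSnd (m := 0) hlr (by norm_num) hb₁).continuousOn
  obtain ⟨C₀, hC₀⟩ := exists_abs_addDivMul_le hq ha₀.continuousOn hb₀.continuousOn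
  obtain ⟨C₁, hC₁⟩ := exists_abs_addDivMul_le hq ha₁.continuousOn hb₁.continuousOn
  obtain ⟨C₂, hC₂⟩ := exists_abs_addDivMul_le hq ha₂ hb₂
  refine ⟨addDivMul f g a₀ b₀, addDivMul f g a₁ b₁, addDivMul f g a₂ b₂, fun x hx => ?_,
    fun x hx => ?_, fun x hx => ?_, ?_, max C₀ (max C₁ C₂), fun x hx => ?_⟩
  · rw [← derivWithin_of_mem_nhds (Icc_mem_nhds hx.1 hx.2)]
    simp only [addDivMul, a₀, b₀]
    ring
  · exact hasDerivAt_addDivMul hf₁ hg₁ (ha₀.of_le (by norm_num)) (hb₀.of_le (by norm_num)) hx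
      (hg0 x hx)
  · exact hasDerivAt_addDivMul hf₁ hg₁ ha₁ hb₁ hx (hg0 x hx)
  · exact (hf.continuousOn.mono Ioo_subset_Icc_self).addDivMul
      (hg.continuousOn.mono Ioo_subset_Icc_self) hg0 ha₂ hb₂
  · exact ⟨(hC₀ x hx).trans (le_max_left _ _),
      (hC₁ x hx).trans (le_max_of_le_right (le_max_left _ _)),
      (hC₂ x hx).trans (le_max_of_le_right (le_max_right _ _))⟩

theorem transformed_drift_C2_bounded_general
    (l r w₀ : ℝ) (hlr : l < r) (hw₀ : w₀ ∈ Set.Ioo l r)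
    (f g : ℝ → ℝ)
    (hf : ContDiffOn ℝ 2 f (Set.Icc l r))
    (hg : ContDiffOn ℝ 3 g (Set.Icc l r))
    (hgpos : ∀ x ∈ Set.Ioo l r, 0 < g x)
    (Φ Ψ : ℝ → ℝ)
    (hΦ : ∀ x, Φ x = ∫ w in w₀..x, 1 / g w)
    (hΨmem : ∀ y, Ψ y ∈ Set.Ioo l r)
    (hΨΦ : ∀ x ∈ Set.Ioo l r, Ψ (Φ x) = x)
    (hΦΨ : ∀ y, Φ (Ψ y) = y)
    (hliml : ∃ Ll : ℝ, Tendsto (fun x => f x / g x) (nhdsWithin l (Set.Ioi l)) (nhds Ll))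
    (hlimr : ∃ Lr : ℝ, Tendsto (fun x => f x / g x) (nhdsWithin r (Set.Iio r)) (nhds Lr))
    (H : ℝ → ℝ → ℝ)
    (hH : ∀ μ x, H μ x = f (Ψ x) / g (Ψ x) - (1 / 2) * deriv g (Ψ x) - μ) :
    (∀ μ : ℝ, ContDiff ℝ 2 (H μ)) ∧
    (∃ C : ℝ, ∀ μ x : ℝ,
      |H μ x + μ| ≤ C ∧ |deriv (H μ) x| ≤ C ∧ |deriv (deriv (H μ)) x| ≤ C) ∧
    (∃ C : NNReal, ∀ μ : ℝ, LipschitzWith C (H μ) ∧ LipschitzWith C (deriv (H μ))) := by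
  obtain ⟨Ll, hLl⟩ := hliml
  obtain ⟨Lr, hLr⟩ := hlimr
  have hg0 : ∀ x ∈ Ioo l r, g x ≠ 0 := fun x hx => (hgpos x hx).ne'
  have hgc : ContinuousOn g (Ioo l r) := hg.continuousOn.mono Ioo_subset_Icc_self
  have hq : ContinuousOn (fun x => f x / g x) (Ioo l r) :=
    (hf.continuousOn.mono Ioo_subset_Icc_self).div hgc hg0
  have hΦ' : ∀ x ∈ Ioo l r, HasDerivAt Φ (1 / g x) x := fun x hx => by
    simpa only [← funext hΦ] using hasDerivAt_integral_of_continuousOn (u := fun w => 1 / g w)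
      (continuousOn_const.div hgc hg0) isOpen_Ioo (ordConnected_Ioo.uIcc_subset hw₀ hx)
  have hΨ' := hasDerivAt_rightInverse_of_hasDerivAt_one_div hΦ' hgpos hΨmem hΨΦ hΦΨ
  obtain ⟨F, F₁, F₂, hF, hF', hF₁', hF₂, C, hC⟩ := exists_drift_derivatives hlr hf hg hg0
    (exists_abs_le_of_continuousOn_Ioo_of_tendsto hq hLl hLr)
  have hHF : ∀ μ, H μ = fun y => F (Ψ y) - μ := fun μ => funext fun y => by
    rw [hH, hF _ (hΨmem y)]
  have hd₁ : ∀ μ y, HasDerivAt (H μ) (F₁ (Ψ y)) y := fun μ y => hHF μ ▸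
    (hasDerivAt_comp_of_hasDerivAt_div (hF' _ (hΨmem y)) (hΨ' y) (hg0 _ (hΨmem y))).sub_const μ
  have hd₂ : ∀ y, HasDerivAt (fun y => F₁ (Ψ y)) (F₂ (Ψ y)) y := fun y =>
    hasDerivAt_comp_of_hasDerivAt_div (hF₁' _ (hΨmem y)) (hΨ' y) (hg0 _ (hΨmem y))
  have hH₁ : ∀ μ, deriv (H μ) = fun y => F₁ (Ψ y) := fun μ => funext fun y => (hd₁ μ y).deriv
  have hF₂Ψ : Continuous fun y => F₂ (Ψ y) :=
    hF₂.comp_continuous (continuous_iff_continuousAt.2 (hΨ' · |>.continuousAt)) hΨmem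
  refine ⟨fun μ => contDiff_two_of_hasDerivAt (hd₁ μ) hd₂ hF₂Ψ, ⟨C, fun μ y => ?_⟩,
    ⟨C.toNNReal, fun μ => ⟨?_, ?_⟩⟩⟩
  · obtain ⟨h₀, h₁, h₂⟩ := hC _ (hΨmem y)
    rw [hH₁, (hd₂ y).deriv, hHF, sub_add_cancel]
    exact ⟨h₀, h₁, h₂⟩
  · exact lipschitzWith_of_hasDerivAt_of_abs_le (hd₁ μ) fun y => (hC _ (hΨmem y)).2.1
  · rw [hH₁]
    exact lipschitzWith_of_hasDerivAt_of_abs_le hd₂ fun y => (hC _ (hΨmem y)).2.2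

/-- The transformed drift `H μ x = f(Φ⁻¹ x)/g(Φ⁻¹ x) - (1/2) g'(Φ⁻¹ x) - μ`
is `C²` with `H+μ`, `H'`, `H''` uniformly bounded by a constant independent of `μ`;
in particular `H` and `H'` are globally Lipschitz. -/
theorem transformed_drift_C2_bounded
    (l r w₀ : ℝ) (hlr : l < r) (hw₀ : w₀ ∈ Set.Ioo l r)
    (f g : ℝ → ℝ)
    (hf : ContDiffOn ℝ 2 f (Set.Icc l r))
    (hg : ContDiffOn ℝ 3 g (Set.Icc l r))
    (hgpos : ∀ x ∈ Set.Ioo l r, 0 < g x)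
    (Φ Ψ : ℝ → ℝ)
    (hΦ : ∀ x, Φ x = ∫ w in w₀..x, 1 / g w)
    (hlint : Tendsto Φ (nhdsWithin l (Set.Ioo l r)) atBot)
    (hrint : Tendsto Φ (nhdsWithin r (Set.Ioo l r)) atTop)
    (hΨmem : ∀ y, Ψ y ∈ Set.Ioo l r)
    (hΨΦ : ∀ x ∈ Set.Ioo l r, Ψ (Φ x) = x)
    (hΦΨ : ∀ y, Φ (Ψ y) = y)
    (hliml : ∃ Ll : ℝ, Tendsto (fun x => f x / g x) (nhdsWithin l (Set.Ioi l)) (nhds Ll))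
    (hlimr : ∃ Lr : ℝ, Tendsto (fun x => f x / g x) (nhdsWithin r (Set.Iio r)) (nhds Lr))
    (H : ℝ → ℝ → ℝ)
    (hH : ∀ μ x, H μ x = f (Ψ x) / g (Ψ x) - (1 / 2) * deriv g (Ψ x) - μ) :
    (∀ μ : ℝ, ContDiff ℝ 2 (H μ)) ∧
    (∃ C : ℝ, ∀ μ x : ℝ,
      |H μ x + μ| ≤ C ∧ |deriv (H μ) x| ≤ C ∧ |deriv (deriv (H μ)) x| ≤ C) ∧
    (∃ C : NNReal, ∀ μ : ℝ, LipschitzWith C (H μ) ∧ LipschitzWith C (deriv (H μ))) :=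
  transformed_drift_C2_bounded_general l r w₀ hlr hw₀ f g hf hg hgpos Φ Ψ hΦ hΨmem hΨΦ hΦΨ hliml
    hlimr H hH
end

section
/- Assume: (i) H : ℝ → ℝ with sup_x |H(x)+μ| ≤ L_H; (ii) for each k, an approximate flow ŷ_k with |ŷ_k(t_{k+1}) − ỹ_k(t_{k+1})| ≤ K(1 + |Ŷ^{LS}_k|)Δt², where ỹ_k is the exact flow of y' = H(y) started at Ŷ^{LS}_k; (iii) Ŷ^{LS}_m = Y(0) + Σ_{k=0}^{m−1} (ŷ_k(t_{k+1}) − ỹ_k(t_{k+1})) + Σ_{k=0}^{m−1} ∫_{t_k}^{t_{k+1}} (H(ỹ_k(s)) + μ) ds + B(t_m). Then sup_{m=0,…,M} |Ŷ^{LS}_m| ≤ (K T Δt + L_H T + |Y(0)| + sup_{t∈[0,T]} |B(t)|) · e^{K T Δt} almost surely. -/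
open MeasureTheory Finset Set Real

/-- A priori pathwise bound on the fully-discrete Lamperti-splitting
scheme: `sup_{m ≤ M} |Ŷ^{LS}_m| ≤ (KTΔt + L_H T + |Y(0)| + sup_{[0,T]}|B|) e^{KTΔt}`. -/
theorem lamperti_splitting_apriori_bound
    (T : ℝ) (hT : 0 < T) (M : ℕ) (hM : 0 < M) (Δt : ℝ) (hΔt : Δt = T / M)
    (t : ℕ → ℝ) (ht : ∀ m, t m = m * Δt)
    (K : ℝ) (hK : 0 < K) (LH μ : ℝ)
    (H : ℝ → ℝ) (hHbdd : ∀ x, |H x + μ| ≤ LH)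
    (B : ℝ → ℝ) (hBcont : ContinuousOn B (Set.Icc 0 T)) (hB0 : B 0 = 0)
    (Y0 : ℝ) (Yhat : ℕ → ℝ) (hYhat0 : Yhat 0 = Y0)
    (ytilde yhat : ℕ → ℝ → ℝ)
    (hytilde_init : ∀ k, ytilde k (t k) = Yhat k)
    (hytilde_ODE : ∀ k, ∀ s ∈ Set.Icc (t k) (t (k + 1)),
      HasDerivAt (ytilde k) (H (ytilde k s)) s)
    (hlocal : ∀ k, |yhat k (t (k + 1)) - ytilde k (t (k + 1))| ≤
      K * (1 + |Yhat k|) * Δt ^ 2)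
    (hrep : ∀ m, Yhat m =
      Y0 + (∑ k ∈ Finset.range m, (yhat k (t (k + 1)) - ytilde k (t (k + 1))))
        + (∑ k ∈ Finset.range m, ∫ s in t k..t (k + 1), (H (ytilde k s) + μ))
        + B (t m)) :
    ∀ m ≤ M, |Yhat m| ≤
      (K * T * Δt + LH * T + |Y0| + sSup ((fun s => |B s|) '' Set.Icc 0 T)) *
        Real.exp (K * T * Δt) := by
  have hMpos : (0:ℝ) < M := by exact_mod_cast hM
  have hΔtpos : 0 < Δt := by rw [hΔt]; positivity
  have hLH : 0 ≤ LH := le_trans (abs_nonneg _) (hHbdd 0)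
  set S := sSup ((fun s => |B s|) '' Set.Icc 0 T) with hS
  have habs : ContinuousOn (fun s => |B s|) (Set.Icc 0 T) := hBcont.abs
  have hbdd : BddAbove ((fun s => |B s|) '' Set.Icc 0 T) :=
    (isCompact_Icc.image_of_continuousOn habs).bddAbove
  have hSmem : ∀ s ∈ Set.Icc 0 T, |B s| ≤ S := fun s hs => le_csSup hbdd ⟨s, hs, rfl⟩
  have hS0 : 0 ≤ S := by
    have h := hSmem 0 ⟨le_refl 0, hT.le⟩
    rw [hB0] at h; simpa using h
  set A := K * T * Δt + LH * T + |Y0| + S with hA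
  have hApos : 0 ≤ A := by positivity
  have hMΔt : (M:ℝ) * Δt = T := by rw [hΔt]; field_simp
  have htm : ∀ m ≤ M, t m ∈ Set.Icc 0 T := by
    intro m hm
    rw [ht]
    refine ⟨by positivity, ?_⟩
    have hmc : (m:ℝ) ≤ M := by exact_mod_cast hm
    calc (m:ℝ) * Δt ≤ M * Δt := by gcongr
      _ = T := hMΔt
  have hrec : ∀ m ≤ M, |Yhat m| ≤ A + K * Δt^2 * ∑ k ∈ Finset.range m, |Yhat k| := by
    intro m hm
    have hint : ∀ k, |∫ s in t k..t (k+1), (H (ytilde k s) + μ)| ≤ LH * Δt := by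
      intro k
      have hnorm := intervalIntegral.norm_integral_le_of_norm_le_const
        (f := fun s => H (ytilde k s) + μ) (C := LH) (a := t k) (b := t (k+1))
        (fun x _ => hHbdd _)
      have ht' : t (k+1) - t k = Δt := by
        rw [ht, ht]; push_cast; ring
      rw [Real.norm_eq_abs] at hnorm
      calc |∫ s in t k..t (k+1), (H (ytilde k s) + μ)| ≤ LH * |t (k+1) - t k| := hnorm
        _ = LH * Δt := by rw [ht', abs_of_pos hΔtpos]
    have h1 : |Yhat m| ≤ |Y0| + (∑ k ∈ Finset.range m, K * (1 + |Yhat k|) * Δt^2)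
        + (∑ k ∈ Finset.range m, LH * Δt) + S := by
      rw [hrep m]
      have hB' : |B (t m)| ≤ S := hSmem _ (htm m hm)
      have hs1 : |∑ k ∈ Finset.range m, (yhat k (t (k + 1)) - ytilde k (t (k + 1)))|
          ≤ ∑ k ∈ Finset.range m, K * (1 + |Yhat k|) * Δt^2 :=
        (Finset.abs_sum_le_sum_abs _ _).trans (Finset.sum_le_sum fun k _ => hlocal k)
      have hs2 : |∑ k ∈ Finset.range m, ∫ s in t k..t (k + 1), (H (ytilde k s) + μ)|
          ≤ ∑ k ∈ Finset.range m, LH * Δt :=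
        (Finset.abs_sum_le_sum_abs _ _).trans (Finset.sum_le_sum fun k _ => hint k)
      calc |Y0 + _ + _ + B (t m)| ≤ |Y0 + _ + _| + |B (t m)| := abs_add_le _ _
        _ ≤ (|Y0 + _| + |_|) + |B (t m)| := by gcongr; exact abs_add_le _ _
        _ ≤ ((|Y0| + |_|) + |_|) + |B (t m)| := by gcongr; exact abs_add_le _ _
        _ ≤ |Y0| + (∑ k ∈ Finset.range m, K * (1 + |Yhat k|) * Δt^2)
            + (∑ k ∈ Finset.range m, LH * Δt) + S := by gcongr
    have hmT : (m:ℝ) * Δt ≤ T := by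
      have hmc : (m:ℝ) ≤ M := by exact_mod_cast hm
      calc (m:ℝ) * Δt ≤ M * Δt := by gcongr
        _ = T := hMΔt
    have hs3 : ∑ k ∈ Finset.range m, K * (1 + |Yhat k|) * Δt^2
        = m * (K * Δt^2) + K * Δt^2 * ∑ k ∈ Finset.range m, |Yhat k| := by
      have he : ∀ k, K * (1 + |Yhat k|) * Δt^2 = K*Δt^2 + K*Δt^2*|Yhat k| :=
        fun k => by ring
      simp_rw [he, Finset.sum_add_distrib, Finset.sum_const, Finset.card_range,
        nsmul_eq_mul, Finset.mul_sum]
    have hs4 : ∑ k ∈ Finset.range m, LH * Δt = m * (LH * Δt) := by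
      simp [Finset.sum_const, mul_comm]
    rw [hs3, hs4] at h1
    have hb1 : (m:ℝ) * (K * Δt^2) ≤ K * T * Δt := by
      nlinarith [mul_le_mul_of_nonneg_left hmT (by positivity : (0:ℝ) ≤ K * Δt)]
    have hb2 : (m:ℝ) * (LH * Δt) ≤ LH * T := by
      nlinarith [mul_le_mul_of_nonneg_left hmT hLH]
    rw [hA]
    linarith
  set x := 1 + K * Δt^2 with hx
  have hx1 : 1 < x := by
    have h : 0 < K * Δt^2 := by positivity
    rw [hx]; linarith
  have hx0 : (0:ℝ) < x := by linarith
  have hpow : ∀ m ≤ M, |Yhat m| ≤ A * x^m := by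
    intro m
    induction m using Nat.strong_induction_on with
    | _ m ih =>
      intro hm
      have h0 := hrec m hm
      have hsum : ∑ k ∈ Finset.range m, |Yhat k| ≤ ∑ k ∈ Finset.range m, A * x^k := by
        apply Finset.sum_le_sum
        intro k hk
        exact ih k (Finset.mem_range.mp hk) ((Finset.mem_range.mp hk).le.trans hm)
      have hgeo : ∑ k ∈ Finset.range m, x^k = (x^m - 1)/(x - 1) :=
        geom_sum_eq (ne_of_gt hx1) m
      have hsum2 : ∑ k ∈ Finset.range m, A * x^k = A * ((x^m - 1)/(x - 1)) := by
        rw [← Finset.mul_sum, hgeo]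
      have hxm1 : x - 1 = K * Δt^2 := by rw [hx]; ring
      have hKΔ : (0:ℝ) < K * Δt^2 := by positivity
      have key : K * Δt^2 * ∑ k ∈ Finset.range m, |Yhat k| ≤ A * (x^m - 1) := by
        calc K * Δt^2 * ∑ k ∈ Finset.range m, |Yhat k|
            ≤ K * Δt^2 * (A * ((x^m - 1)/(x - 1))) := by
              apply mul_le_mul_of_nonneg_left _ hKΔ.le
              rw [← hsum2]; exact hsum
          _ = A * (x^m - 1) := by rw [hxm1]; field_simp
      calc |Yhat m| ≤ A + K * Δt^2 * ∑ k ∈ Finset.range m, |Yhat k| := h0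
        _ ≤ A + A * (x^m - 1) := by linarith
        _ = A * x^m := by ring
  intro m hm
  have h1 := hpow m hm
  have hmT : (m:ℝ) * Δt ≤ T := by
    have hmc : (m:ℝ) ≤ M := by exact_mod_cast hm
    calc (m:ℝ) * Δt ≤ M * Δt := by gcongr
      _ = T := hMΔt
  have h2 : x ^ m ≤ Real.exp (K * T * Δt) := by
    calc x ^ m ≤ (Real.exp (K * Δt^2)) ^ m := by
          apply pow_le_pow_left₀ hx0.le
          have := Real.add_one_le_exp (K * Δt^2)
          linarith
      _ = Real.exp (m * (K * Δt^2)) := by rw [← Real.exp_nat_mul]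
      _ ≤ Real.exp (K * T * Δt) := by
          apply Real.exp_le_exp.mpr
          nlinarith
  calc |Yhat m| ≤ A * x^m := h1
    _ ≤ A * Real.exp (K * T * Δt) := by gcongr
end

section
/- The function y(t) = W( ((1−x_m) e^{(1−x_m)/x_m}) / (x_m e^{λ²(t−t_m)}) ) + λ²(t−t_m) + log( (x_m/(1−x_m)) · ((1−w₀)/w₀) ) − (1−x_m)/x_m, where W is the Lambert W function, solves the ODE y'(t) = λ² Φ⁻¹(y(t)) with y(t_m) = Φ(x_m), where Φ⁻¹(x) = w₀ e^x / (w₀ e^x + 1 − w₀). -/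
/-!
The principal branch `W` of the Lambert function is the inverse of the increasing map
`u ↦ u eᵘ` on `(0, ∞)`, hence continuous and, by the inverse function theorem, differentiable
with `W'(z) = 1 / (e^{W z} (1 + W z))`. For `F(s) = W(c e⁻ˢ) + s` this gives
`F'(s) = 1 - W/(1 + W) = 1/(1 + W)`, while `W eᵂ = c e⁻ˢ` gives `e^{F(s)} W = c`. With the constants
of the statement the latter says `w₀ e^{y} W = 1 - w₀`, so the logistic function `Ψ = Φ⁻¹` evaluates
to `1/(1 + W)` along `y` as well. At `t = t_m` the argument of `W` is `b eᵇ` with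
`b = (1 - x_m)/x_m`, so `W = b` and `y(t_m)` collapses to `Φ(x_m)`.
-/

open Set Real Filter Topology

lemma strictMonoOn_mul_exp : StrictMonoOn (fun u : ℝ => u * exp u) (Ici 0) :=
  fun _ ha _ _ hab => mul_lt_mul'' hab (exp_lt_exp.2 hab) ha (exp_pos _).le

def IsLambertW (W : ℝ → ℝ) : Prop :=
  ∀ z > (0 : ℝ), 0 < W z ∧ W z * exp (W z) = z

namespace IsLambertW

variable {W : ℝ → ℝ} (hW : IsLambertW W)
include hW

lemma apply_mul_exp {u : ℝ} (hu : 0 < u) : W (u * exp u) = u := by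
  have hz := hW _ (mul_pos hu (exp_pos u))
  exact strictMonoOn_mul_exp.injOn (mem_Ici.2 hz.1.le) (mem_Ici.2 hu.le) hz.2

lemma strictMonoOn : StrictMonoOn W (Ioi 0) := by
  intro a ha b hb hab
  have hWa := hW a ha
  have hWb := hW b hb
  rw [← strictMonoOn_mul_exp.lt_iff_lt (mem_Ici.2 hWa.1.le) (mem_Ici.2 hWb.1.le)]
  simpa only [hWa.2, hWb.2] using hab

lemma image_Ioi : W '' Ioi 0 = Ioi 0 := by
  refine Subset.antisymm (image_subset_iff.2 fun z hz => (hW z hz).1) fun u hu => ?_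
  exact ⟨u * exp u, mul_pos hu (exp_pos u), hW.apply_mul_exp hu⟩

lemma continuousAt {z : ℝ} (hz : 0 < z) : ContinuousAt W z := by
  refine hW.strictMonoOn.continuousAt_of_image_mem_nhds (Ioi_mem_nhds hz) ?_
  rw [hW.image_Ioi]
  exact Ioi_mem_nhds (hW z hz).1

lemma hasDerivAt {z : ℝ} (hz : 0 < z) :
    HasDerivAt W (exp (W z) * (1 + W z))⁻¹ z := by
  have hf : HasDerivAt (fun u => u * exp u) (exp (W z) * (1 + W z)) (W z) :=
    ((hasDerivAt_id' _).mul (hasDerivAt_exp _)).congr_deriv (by ring)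
  refine hf.of_local_left_inverse (hW.continuousAt hz) ?_ ?_
  · have := (hW z hz).1
    positivity
  · filter_upwards [Ioi_mem_nhds hz] with x hx using (hW x hx).2

lemma hasDerivAt_apply_div_exp_add {c : ℝ} (hc : 0 < c) (s : ℝ) :
    HasDerivAt (fun s => W (c / exp s) + s) (1 + W (c / exp s))⁻¹ s := by
  have hz : 0 < c / exp s := div_pos hc (exp_pos s)
  have hinner : HasDerivAt (fun s => c / exp s) (-(c / exp s)) s :=
    ((hasDerivAt_const s c).fun_div (hasDerivAt_exp s) (exp_ne_zero s)).congr_deriv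
      (by field_simp; ring)
  refine (((hW.hasDerivAt hz).comp s hinner).add (hasDerivAt_id' s)).congr_deriv ?_
  obtain ⟨hw, hwz⟩ := hW _ hz
  set w := W (c / exp s)
  rw [← hwz]
  field_simp
  ring

lemma exp_apply_div_exp_add_mul {c : ℝ} (hc : 0 < c) (s : ℝ) :
    exp (W (c / exp s) + s) * W (c / exp s) = c := by
  rw [exp_add, mul_right_comm, mul_comm (exp _), (hW _ (div_pos hc (exp_pos s))).2,
    div_mul_cancel₀ _ (exp_ne_zero s)]

end IsLambertW

lemma div_add_mul_eq_inv_one_add {K : Type*} [Field K] {a w : K} (ha : a ≠ 0) :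
    a / (a + a * w) = (1 + w)⁻¹ := by
  rw [← mul_one_add, div_mul_cancel_left₀ ha]

theorem sis_ode_explicit_solution_general
    (lam w₀ xm tm : ℝ)
    (hw₀ : w₀ ∈ Set.Ioo (0 : ℝ) 1) (hxm : xm ∈ Set.Ioo (0 : ℝ) 1)
    (W : ℝ → ℝ) (hW : ∀ z > (0 : ℝ), 0 < W z ∧ W z * Real.exp (W z) = z)
    (Ψ Φ : ℝ → ℝ)
    (hΨ : ∀ u, Ψ u = w₀ * Real.exp u / (w₀ * Real.exp u + (1 - w₀)))
    (hΦ : ∀ x, Φ x = Real.log x - Real.log (1 - x) - Real.log w₀ + Real.log (1 - w₀))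
    (y : ℝ → ℝ)
    (hy : ∀ t, y t =
      W ((1 - xm) * Real.exp ((1 - xm) / xm) / (xm * Real.exp (lam ^ 2 * (t - tm))))
        + lam ^ 2 * (t - tm)
        + Real.log ((xm / (1 - xm)) * ((1 - w₀) / w₀))
        - (1 - xm) / xm) :
    y tm = Φ xm ∧ ∀ t ≥ tm, HasDerivAt y (lam ^ 2 * Ψ (y t)) t := by
  obtain ⟨hw0, hw1⟩ := hw₀
  obtain ⟨hx0, hx1⟩ := hxm
  have hW : IsLambertW W := hW
  set b := (1 - xm) / xm
  set K := xm / (1 - xm) * ((1 - w₀) / w₀)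
  have hb : 0 < b := div_pos (by linarith) hx0
  have hc : 0 < b * exp b := by positivity
  have hy' : y = fun t =>
      (W (b * exp b / exp (lam ^ 2 * (t - tm))) + lam ^ 2 * (t - tm)) + (log K - b) :=
    funext fun t => by rw [hy, div_mul_eq_div_div, mul_div_right_comm]; ring
  constructor
  · simp only [hy', hΦ, sub_self, mul_zero, exp_zero, div_one, hW.apply_mul_exp hb]
    rw [log_mul (by positivity) (by positivity), log_div (by positivity) (by linarith),
      log_div (by linarith) (by positivity)]
    ring
  · intro t _
    set w := W (b * exp b / exp (lam ^ 2 * (t - tm)))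
    have hexp : w₀ * exp (y t) * w = 1 - w₀ := by
      rw [hy', mul_assoc, exp_add, mul_right_comm, hW.exp_apply_div_exp_add_mul hc,
        exp_sub, exp_log (by positivity)]
      simp only [b, K]
      field_simp
    rw [hΨ, ← hexp, div_add_mul_eq_inv_one_add (by positivity), hy']
    exact ((hW.hasDerivAt_apply_div_exp_add hc _).comp t
      (((hasDerivAt_id' t).sub_const tm).const_mul (lam ^ 2))).add_const _ |>.congr_deriv
        (by rw [mul_one, mul_comm])

/-- The explicit formula involving the (principal branch of the)
Lambert W function solves the SIS splitting ODE `y' = λ² Φ⁻¹(y)` with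
`y(t_m) = Φ(x_m)`. -/
theorem sis_ode_explicit_solution
    (lam w₀ xm tm : ℝ) (hlam : 0 < lam)
    (hw₀ : w₀ ∈ Set.Ioo (0 : ℝ) 1) (hxm : xm ∈ Set.Ioo (0 : ℝ) 1)
    (W : ℝ → ℝ) (hW : ∀ z > (0 : ℝ), 0 < W z ∧ W z * Real.exp (W z) = z)
    (Ψ Φ : ℝ → ℝ)
    (hΨ : ∀ u, Ψ u = w₀ * Real.exp u / (w₀ * Real.exp u + (1 - w₀)))
    (hΦ : ∀ x, Φ x = Real.log x - Real.log (1 - x) - Real.log w₀ + Real.log (1 - w₀))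
    (y : ℝ → ℝ)
    (hy : ∀ t, y t =
      W ((1 - xm) * Real.exp ((1 - xm) / xm) / (xm * Real.exp (lam ^ 2 * (t - tm))))
        + lam ^ 2 * (t - tm)
        + Real.log ((xm / (1 - xm)) * ((1 - w₀) / w₀))
        - (1 - xm) / xm) :
    y tm = Φ xm ∧ ∀ t ≥ tm, HasDerivAt y (lam ^ 2 * Ψ (y t)) t :=
  sis_ode_explicit_solution_general lam w₀ xm tm hw₀ hxm W hW Ψ Φ hΨ hΦ y hy
end

section
/- The function y(t) = log( (1/2)( sqrt( e^{2(1+λ²)(t−t_m)} (e^{−y_m} − e^{y_m})² + 4 ) − e^{(1+λ²)(t−t_m)} (e^{−y_m} − e^{y_m}) ) ) solves the ODE y'(t) = (1+λ²) tanh(y(t)) on [t_m, ∞) with initial condition y(t_m) = y_m. -/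
open Set Real

/-- The explicit formula solves the Allen–Cahn splitting ODE
`y' = (1+λ²) tanh(y)` on `[t_m, ∞)` with `y(t_m) = y_m`. -/
theorem allen_cahn_ode_explicit_solution
    (lam ym tm : ℝ) (hlam : 0 < lam)
    (y : ℝ → ℝ)
    (hy : ∀ t, y t = Real.log ((1 / 2) *
      (Real.sqrt (Real.exp (2 * (1 + lam ^ 2) * (t - tm)) *
          (Real.exp (-ym) - Real.exp ym) ^ 2 + 4)
        - Real.exp ((1 + lam ^ 2) * (t - tm)) * (Real.exp (-ym) - Real.exp ym)))) :
    y tm = ym ∧ ∀ t ≥ tm, HasDerivAt y ((1 + lam ^ 2) * Real.tanh (y t)) t := by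
  set A : ℝ := 1 + lam ^ 2 with hAdef
  set C : ℝ := Real.exp (-ym) - Real.exp ym with hCdef
  have hApos : 0 < A := by positivity
  have hprod : Real.exp ym * Real.exp (-ym) = 1 := by
    rw [← Real.exp_add]; simp
  -- key pointwise facts
  have hE2 : ∀ t : ℝ, Real.exp (2 * A * (t - tm)) = (Real.exp (A * (t - tm))) ^ 2 := by
    intro t; rw [sq, ← Real.exp_add]; ring_nf
  have hspos : ∀ t : ℝ, 0 < Real.exp (2 * A * (t - tm)) * C ^ 2 + 4 := by
    intro t; positivity
  have hsgt : ∀ t : ℝ,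
      Real.exp (A * (t - tm)) * C < Real.sqrt (Real.exp (2 * A * (t - tm)) * C ^ 2 + 4) := by
    intro t
    have h1 : Real.exp (A * (t - tm)) * C ≤ |Real.exp (A * (t - tm)) * C| := le_abs_self _
    have h2 : |Real.exp (A * (t - tm)) * C| =
        Real.sqrt ((Real.exp (A * (t - tm)) * C) ^ 2) := (Real.sqrt_sq_eq_abs _).symm
    have h3 : Real.sqrt ((Real.exp (A * (t - tm)) * C) ^ 2) <
        Real.sqrt (Real.exp (2 * A * (t - tm)) * C ^ 2 + 4) := by
      apply Real.sqrt_lt_sqrt (by positivity)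
      rw [hE2 t]; nlinarith
    linarith [h1, h2 ▸ h3]
  have hgpos : ∀ t : ℝ, 0 < (1 / 2) *
      (Real.sqrt (Real.exp (2 * A * (t - tm)) * C ^ 2 + 4)
        - Real.exp (A * (t - tm)) * C) := by
    intro t; exact mul_pos one_half_pos (sub_pos.mpr (hsgt t))
  constructor
  · rw [hy tm]
    have h0 : tm - tm = 0 := sub_self tm
    have hC4 : C ^ 2 + 4 = (Real.exp ym + Real.exp (-ym)) ^ 2 := by
      rw [hCdef]; nlinarith [hprod]
    have hsqrt : Real.sqrt (Real.exp (2 * A * (tm - tm)) * C ^ 2 + 4)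
        = Real.exp ym + Real.exp (-ym) := by
      rw [h0, mul_zero, Real.exp_zero, one_mul, hC4]
      exact Real.sqrt_sq (by positivity)
    rw [hsqrt, h0, mul_zero, Real.exp_zero, one_mul]
    have : (1 / 2 : ℝ) * (Real.exp ym + Real.exp (-ym) - C) = Real.exp ym := by
      rw [hCdef]; ring
    rw [this, Real.log_exp]
  · intro t _
    -- derivative of the inner function
    have h1 : HasDerivAt (fun t => A * (t - tm)) A t := by
      simpa using ((hasDerivAt_id t).sub_const tm).const_mul A
    have h2 : HasDerivAt (fun t => 2 * A * (t - tm)) (2 * A) t := by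
      simpa using ((hasDerivAt_id t).sub_const tm).const_mul (2 * A)
    have hE : HasDerivAt (fun t => Real.exp (A * (t - tm)))
        (Real.exp (A * (t - tm)) * A) t := h1.exp
    have hP : HasDerivAt (fun t => Real.exp (2 * A * (t - tm)))
        (Real.exp (2 * A * (t - tm)) * (2 * A)) t := h2.exp
    have hQ : HasDerivAt (fun t => Real.exp (2 * A * (t - tm)) * C ^ 2 + 4)
        (Real.exp (2 * A * (t - tm)) * (2 * A) * C ^ 2) t := (hP.mul_const _).add_const 4
    have hS : HasDerivAt (fun t => Real.sqrt (Real.exp (2 * A * (t - tm)) * C ^ 2 + 4))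
        (Real.exp (2 * A * (t - tm)) * (2 * A) * C ^ 2 /
          (2 * Real.sqrt (Real.exp (2 * A * (t - tm)) * C ^ 2 + 4))) t :=
      hQ.sqrt (hspos t).ne'
    have hU : HasDerivAt (fun t => Real.exp (A * (t - tm)) * C)
        (Real.exp (A * (t - tm)) * A * C) t := hE.mul_const C
    have hG : HasDerivAt (fun t => (1 / 2) *
        (Real.sqrt (Real.exp (2 * A * (t - tm)) * C ^ 2 + 4)
          - Real.exp (A * (t - tm)) * C))
        ((1 / 2) * (Real.exp (2 * A * (t - tm)) * (2 * A) * C ^ 2 /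
          (2 * Real.sqrt (Real.exp (2 * A * (t - tm)) * C ^ 2 + 4))
          - Real.exp (A * (t - tm)) * A * C)) t := (hS.sub hU).const_mul (1 / 2)
    have hL := hG.log (hgpos t).ne'
    have hyfun : y = fun t => Real.log ((1 / 2) *
        (Real.sqrt (Real.exp (2 * A * (t - tm)) * C ^ 2 + 4)
          - Real.exp (A * (t - tm)) * C)) := funext hy
    rw [hyfun]
    convert hL using 1
    -- now the value equality
    set E : ℝ := Real.exp (A * (t - tm)) with hEdef
    set s : ℝ := Real.sqrt (Real.exp (2 * A * (t - tm)) * C ^ 2 + 4) with hsdef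
    have hs0 : 0 < s := Real.sqrt_pos.mpr (hspos t)
    have hs2 : s ^ 2 = E ^ 2 * C ^ 2 + 4 := by
      rw [hsdef, Real.sq_sqrt (hspos t).le, hE2 t]
    have hEC : E * C < s := hsgt t
    have hg : (0 : ℝ) < (1 / 2) * (s - E * C) := hgpos t
    have hP2 : Real.exp (2 * A * (t - tm)) = E ^ 2 := hE2 t
    beta_reduce
    have hsne : s ≠ 0 := hs0.ne'
    have hsub : s - E * C ≠ 0 := sub_ne_zero.mpr hEC.ne'
    have htanh : Real.tanh (Real.log ((1 / 2) * (s - E * C))) = -(E * C) / s := by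
      set g : ℝ := (1 / 2) * (s - E * C) with hgdef
      rw [Real.tanh_eq_sinh_div_cosh, Real.sinh_log hg, Real.cosh_log hg]
      have hg2 : g ^ 2 + 1 ≠ 0 := by positivity
      have h1 : (g - g⁻¹) / 2 / ((g + g⁻¹) / 2) = (g ^ 2 - 1) / (g ^ 2 + 1) := by
        rw [div_eq_div_iff (by positivity) hg2]
        field_simp
      rw [h1, div_eq_div_iff hg2 hs0.ne', hgdef]
      linear_combination ((s - E * C) / 4) * hs2
    rw [show Real.sqrt (Real.exp (2 * A * (t - tm)) * C ^ 2 + 4) = s from rfl]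
    rw [htanh, hP2]
    field_simp
    ring
end

section
/- Let f(x) = (x−l)^{β_l} (x−r)^{β_r} f̃(x) and g(x) = (x−l)^{α_l} (x−r)^{α_r} g̃(x) be polynomials with f̃, g̃ having no roots in {l, r}, g̃ having no roots in [l,r], g strictly positive on (l,r), α_l, α_r, β_l, β_r positive integers with α_l ≤ β_l and α_r ≤ β_r. Then the limits lim_{x→l⁺} f(x)/g(x) and lim_{x→r⁻} f(x)/g(x) exist and are finite, and ∫_{w₀}^l 1/g(w) dw = −∞ and ∫_{w₀}^r 1/g(w) dw = +∞ for any w₀ ∈ (l,r). -/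
open MeasureTheory Set Filter Polynomial Real

/-- For polynomial coefficients `f = (x−l)^{β_l}(x−r)^{β_r} f̃` and
`g = (x−l)^{α_l}(x−r)^{α_r} g̃` with `g̃` root-free on `[l,r]`, `f̃` root-free at `l, r`,
`g > 0` on `(l,r)` and `α_l ≤ β_l`, `α_r ≤ β_r`, the boundary limits of `f/g` exist
and are finite and `1/g` is non-integrable at both boundary points. -/
theorem polynomial_class_satisfies_assumptions
    (l r w₀ : ℝ) (hlr : l < r) (hw₀ : w₀ ∈ Set.Ioo l r)
    (αl αr βl βr : ℕ) (hαl : 0 < αl) (hαr : 0 < αr) (hβl : 0 < βl) (hβr : 0 < βr)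
    (hlβ : αl ≤ βl) (hrβ : αr ≤ βr)
    (ftil gtil f g : Polynomial ℝ)
    (hf : f = (Polynomial.X - Polynomial.C l) ^ βl *
      (Polynomial.X - Polynomial.C r) ^ βr * ftil)
    (hg : g = (Polynomial.X - Polynomial.C l) ^ αl *
      (Polynomial.X - Polynomial.C r) ^ αr * gtil)
    (hftil_l : ftil.eval l ≠ 0) (hftil_r : ftil.eval r ≠ 0)
    (hgtil : ∀ x ∈ Set.Icc l r, gtil.eval x ≠ 0)
    (hgpos : ∀ x ∈ Set.Ioo l r, 0 < g.eval x) :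
    (∃ Ll : ℝ, Tendsto (fun x => f.eval x / g.eval x)
        (nhdsWithin l (Set.Ioi l)) (nhds Ll)) ∧
    (∃ Lr : ℝ, Tendsto (fun x => f.eval x / g.eval x)
        (nhdsWithin r (Set.Iio r)) (nhds Lr)) ∧
    Tendsto (fun x => ∫ w in w₀..x, (g.eval w)⁻¹) (nhdsWithin l (Set.Ioo l r)) atBot ∧
    Tendsto (fun x => ∫ w in w₀..x, (g.eval w)⁻¹) (nhdsWithin r (Set.Ioo l r)) atTop := by
  -- the "ratio" function with the common factors cancelled
  set φ : ℝ → ℝ := fun x =>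
    (x - l) ^ (βl - αl) * (x - r) ^ (βr - αr) * ftil.eval x / gtil.eval x with hφ
  have hφcont : ∀ x ∈ Set.Icc l r, ContinuousAt φ x := by
    intro x hx
    exact ContinuousAt.div (by fun_prop) (by fun_prop) (hgtil x hx)
  have hratio : ∀ x ∈ Set.Ioo l r, f.eval x / g.eval x = φ x := by
    intro x hx
    have hxl : x - l ≠ 0 := sub_ne_zero.2 (ne_of_gt hx.1)
    have hxr : x - r ≠ 0 := sub_ne_zero.2 (ne_of_lt hx.2)
    have hgt : gtil.eval x ≠ 0 := hgtil x ⟨hx.1.le, hx.2.le⟩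
    have e1 : (x - l) ^ βl = (x - l) ^ (βl - αl) * (x - l) ^ αl := by
      rw [← pow_add, Nat.sub_add_cancel hlβ]
    have e2 : (x - r) ^ βr = (x - r) ^ (βr - αr) * (x - r) ^ αr := by
      rw [← pow_add, Nat.sub_add_cancel hrβ]
    simp only [hf, hg, hφ, eval_mul, eval_pow, eval_sub, eval_X, eval_C, e1, e2]
    field_simp
  -- part 1 : limit at l
  have part1 : ∃ Ll : ℝ, Tendsto (fun x => f.eval x / g.eval x)
      (nhdsWithin l (Set.Ioi l)) (nhds Ll) := by
    refine ⟨φ l, ?_⟩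
    have h1 : Tendsto φ (nhdsWithin l (Set.Ioi l)) (nhds (φ l)) :=
      ((hφcont l ⟨le_refl l, hlr.le⟩).continuousWithinAt).tendsto
    refine h1.congr' ?_
    filter_upwards [Ioo_mem_nhdsGT_of_mem (⟨le_refl l, hlr⟩ : l ∈ Set.Ico l r)] with x hx
    exact (hratio x hx).symm
  have part2 : ∃ Lr : ℝ, Tendsto (fun x => f.eval x / g.eval x)
      (nhdsWithin r (Set.Iio r)) (nhds Lr) := by
    refine ⟨φ r, ?_⟩
    have h1 : Tendsto φ (nhdsWithin r (Set.Iio r)) (nhds (φ r)) :=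
      ((hφcont r ⟨hlr.le, le_refl r⟩).continuousWithinAt).tendsto
    refine h1.congr' ?_
    filter_upwards [Ioo_mem_nhdsLT_of_mem (⟨hlr, le_refl r⟩ : r ∈ Set.Ioc l r)] with x hx
    exact (hratio x hx).symm
  -- the key bound: g(w) ≤ C (w - l) and g(w) ≤ C (r - w) on [l, r]
  have hgl : g = (Polynomial.X - Polynomial.C l) *
      ((Polynomial.X - Polynomial.C l) ^ (αl - 1) *
        (Polynomial.X - Polynomial.C r) ^ αr * gtil) := by
    rw [hg]
    have : (Polynomial.X - Polynomial.C l) ^ αl =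
        (Polynomial.X - Polynomial.C l) * (Polynomial.X - Polynomial.C l) ^ (αl - 1) := by
      rw [← pow_succ', Nat.sub_add_cancel hαl]
    rw [this]; ring
  have hgr : g = (Polynomial.X - Polynomial.C r) *
      ((Polynomial.X - Polynomial.C l) ^ αl *
        (Polynomial.X - Polynomial.C r) ^ (αr - 1) * gtil) := by
    rw [hg]
    have : (Polynomial.X - Polynomial.C r) ^ αr =
        (Polynomial.X - Polynomial.C r) * (Polynomial.X - Polynomial.C r) ^ (αr - 1) := by
      rw [← pow_succ', Nat.sub_add_cancel hαr]
    rw [this]; ring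
  obtain ⟨C1, hC1⟩ := (isCompact_Icc (a := l) (b := r)).exists_bound_of_continuousOn
    (f := fun x => ((Polynomial.X - Polynomial.C l) ^ (αl - 1) *
      (Polynomial.X - Polynomial.C r) ^ αr * gtil).eval x) (by fun_prop)
  obtain ⟨C2, hC2⟩ := (isCompact_Icc (a := l) (b := r)).exists_bound_of_continuousOn
    (f := fun x => ((Polynomial.X - Polynomial.C l) ^ αl *
      (Polynomial.X - Polynomial.C r) ^ (αr - 1) * gtil).eval x) (by fun_prop)
  set C : ℝ := max 1 (max C1 C2) with hCdef
  have hCpos : 0 < C := lt_of_lt_of_le one_pos (le_max_left _ _)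
  have hboundl : ∀ w ∈ Set.Icc l r, g.eval w ≤ C * (w - l) := by
    intro w hw
    have h1 : g.eval w = (w - l) * ((Polynomial.X - Polynomial.C l) ^ (αl - 1) *
        (Polynomial.X - Polynomial.C r) ^ αr * gtil).eval w := by
      rw [hgl]; simp [eval_mul, eval_sub, eval_X, eval_C]
    have h2 := hC1 w hw
    have h3 : ((Polynomial.X - Polynomial.C l) ^ (αl - 1) *
        (Polynomial.X - Polynomial.C r) ^ αr * gtil).eval w ≤ C := by
      calc _ ≤ ‖((Polynomial.X - Polynomial.C l) ^ (αl - 1) *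
          (Polynomial.X - Polynomial.C r) ^ αr * gtil).eval w‖ := le_abs_self _
        _ ≤ C1 := h2
        _ ≤ C := le_trans (le_max_left _ _) (le_max_right _ _)
    have h4 : 0 ≤ w - l := sub_nonneg.2 hw.1
    rw [h1]
    nlinarith
  have hboundr : ∀ w ∈ Set.Icc l r, g.eval w ≤ C * (r - w) := by
    intro w hw
    have h1 : g.eval w = (w - r) * ((Polynomial.X - Polynomial.C l) ^ αl *
        (Polynomial.X - Polynomial.C r) ^ (αr - 1) * gtil).eval w := by
      rw [hgr]; simp [eval_mul, eval_sub, eval_X, eval_C]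
    have h2 := hC2 w hw
    have h3 : -C ≤ ((Polynomial.X - Polynomial.C l) ^ αl *
        (Polynomial.X - Polynomial.C r) ^ (αr - 1) * gtil).eval w := by
      have := neg_abs_le (((Polynomial.X - Polynomial.C l) ^ αl *
        (Polynomial.X - Polynomial.C r) ^ (αr - 1) * gtil).eval w)
      have hC2' : C2 ≤ C := le_trans (le_max_right _ _) (le_max_right _ _)
      have : |((Polynomial.X - Polynomial.C l) ^ αl *
          (Polynomial.X - Polynomial.C r) ^ (αr - 1) * gtil).eval w| ≤ C :=
        le_trans h2 hC2'
      linarith [abs_le.1 this |>.1]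
    have h4 : w - r ≤ 0 := sub_nonpos.2 hw.2
    rw [h1]
    nlinarith
  -- part 4 : divergence to +∞ at r
  have part4 : Tendsto (fun x => ∫ w in w₀..x, (g.eval w)⁻¹)
      (nhdsWithin r (Set.Ioo l r)) atTop := by
    have hG : Tendsto (fun x => C⁻¹ * (Real.log (r - w₀) - Real.log (r - x)))
        (nhdsWithin r (Set.Ioo l r)) atTop := by
      have h1 : Tendsto (fun x : ℝ => r - x) (nhdsWithin r (Set.Ioo l r)) (nhdsWithin 0 (Set.Ioi 0)) := by
        apply tendsto_nhdsWithin_of_tendsto_nhds_of_eventually_within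
        · have : Tendsto (fun x : ℝ => r - x) (nhds r) (nhds (r - r)) :=
            (continuous_const.sub continuous_id).tendsto r
          simpa using this.mono_left nhdsWithin_le_nhds
        · filter_upwards [self_mem_nhdsWithin] with x hx
          exact sub_pos.2 hx.2
      have h2 : Tendsto (fun x => Real.log (r - x)) (nhdsWithin r (Set.Ioo l r)) atBot :=
        Real.tendsto_log_nhdsGT_zero.comp h1
      have h3 : Tendsto (fun x => Real.log (r - w₀) - Real.log (r - x))
          (nhdsWithin r (Set.Ioo l r)) atTop := by
        have := tendsto_neg_atBot_atTop.comp h2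
        simpa [sub_eq_add_neg] using tendsto_atTop_add_const_left _ (Real.log (r - w₀))
          (this : Tendsto (fun x => -Real.log (r - x)) _ atTop)
      exact h3.const_mul_atTop (inv_pos.2 hCpos)
    refine tendsto_atTop_mono' _ ?_ hG
    have hmem : Set.Ioi w₀ ∈ nhds r := Ioi_mem_nhds hw₀.2
    filter_upwards [self_mem_nhdsWithin, mem_nhdsWithin_of_mem_nhds hmem] with x hx hwx
    -- w₀ < x < r
    have hsub : Set.Icc w₀ x ⊆ Set.Ioo l r := fun w hw =>
      ⟨lt_of_lt_of_le hw₀.1 hw.1, lt_of_le_of_lt hw.2 hx.2⟩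
    have hgne : ∀ w ∈ Set.Icc w₀ x, g.eval w ≠ 0 := fun w hw => (hgpos w (hsub hw)).ne'
    have hle : w₀ ≤ x := le_of_lt hwx
    have huIcc : Set.uIcc w₀ x = Set.Icc w₀ x := Set.uIcc_of_le hle
    have hint2 : IntervalIntegrable (fun w => (g.eval w)⁻¹) volume w₀ x := by
      apply ContinuousOn.intervalIntegrable
      rw [huIcc]
      exact ContinuousOn.inv₀ (by fun_prop) hgne
    have hint1 : IntervalIntegrable (fun w => (C * (r - w))⁻¹) volume w₀ x := by
      apply ContinuousOn.intervalIntegrable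
      rw [huIcc]
      refine ContinuousOn.inv₀ (by fun_prop) ?_
      intro w hw
      have : 0 < r - w := sub_pos.2 (lt_of_le_of_lt hw.2 hx.2)
      positivity
    have hmono : ∫ w in w₀..x, (C * (r - w))⁻¹ ≤ ∫ w in w₀..x, (g.eval w)⁻¹ := by
      apply intervalIntegral.integral_mono_on hle hint1 hint2
      intro w hw
      have hwIoo := hsub hw
      have h0 : 0 < g.eval w := hgpos w hwIoo
      have hb : g.eval w ≤ C * (r - w) := hboundr w ⟨hwIoo.1.le, hwIoo.2.le⟩
      exact inv_anti₀ h0 hb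
    have hcalc : ∫ w in w₀..x, (C * (r - w))⁻¹
        = C⁻¹ * (Real.log (r - w₀) - Real.log (r - x)) := by
      have e : ∀ w : ℝ, (C * (r - w))⁻¹ = C⁻¹ * (r - w)⁻¹ := fun w => by
        rw [mul_inv]
      simp only [e]
      rw [intervalIntegral.integral_const_mul]
      have hcomp : ∫ w in w₀..x, (r - w)⁻¹ = ∫ u in (r - x)..(r - w₀), u⁻¹ :=
        intervalIntegral.integral_comp_sub_left (fun u => u⁻¹) r
      rw [hcomp, integral_inv]
      · rw [Real.log_div (by linarith [hw₀.2] : r - w₀ ≠ 0) (by linarith [hx.2] : r - x ≠ 0)]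
      · intro h
        rw [Set.uIcc_of_le (by linarith [hx.2] : r - x ≤ r - w₀)] at h
        have := h.1
        linarith [hx.2]
    linarith [hmono, hcalc.symm.le]
  -- part 3 : divergence to -∞ at l
  have part3 : Tendsto (fun x => ∫ w in w₀..x, (g.eval w)⁻¹)
      (nhdsWithin l (Set.Ioo l r)) atBot := by
    have hG : Tendsto (fun x => -(C⁻¹ * (Real.log (w₀ - l) - Real.log (x - l))))
        (nhdsWithin l (Set.Ioo l r)) atBot := by
      have h1 : Tendsto (fun x : ℝ => x - l) (nhdsWithin l (Set.Ioo l r)) (nhdsWithin 0 (Set.Ioi 0)) := by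
        apply tendsto_nhdsWithin_of_tendsto_nhds_of_eventually_within
        · have : Tendsto (fun x : ℝ => x - l) (nhds l) (nhds (l - l)) :=
            (continuous_id.sub continuous_const).tendsto l
          simpa using this.mono_left nhdsWithin_le_nhds
        · filter_upwards [self_mem_nhdsWithin] with x hx
          exact sub_pos.2 hx.1
      have h2 : Tendsto (fun x => Real.log (x - l)) (nhdsWithin l (Set.Ioo l r)) atBot :=
        Real.tendsto_log_nhdsGT_zero.comp h1
      have h3 : Tendsto (fun x => Real.log (w₀ - l) - Real.log (x - l))
          (nhdsWithin l (Set.Ioo l r)) atTop := by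
        have := tendsto_neg_atBot_atTop.comp h2
        simpa [sub_eq_add_neg] using tendsto_atTop_add_const_left _ (Real.log (w₀ - l))
          (this : Tendsto (fun x => -Real.log (x - l)) _ atTop)
      have h4 := h3.const_mul_atTop (inv_pos.2 hCpos)
      exact tendsto_neg_atTop_atBot.comp h4
    refine tendsto_atBot_mono' _ ?_ hG
    have hmem : Set.Iio w₀ ∈ nhds l := Iio_mem_nhds hw₀.1
    filter_upwards [self_mem_nhdsWithin, mem_nhdsWithin_of_mem_nhds hmem] with x hx hwx
    -- l < x < w₀
    have hsub : Set.Icc x w₀ ⊆ Set.Ioo l r := fun w hw =>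
      ⟨lt_of_lt_of_le hx.1 hw.1, lt_of_le_of_lt hw.2 hw₀.2⟩
    have hgne : ∀ w ∈ Set.Icc x w₀, g.eval w ≠ 0 := fun w hw => (hgpos w (hsub hw)).ne'
    have hle : x ≤ w₀ := le_of_lt hwx
    have huIcc : Set.uIcc x w₀ = Set.Icc x w₀ := Set.uIcc_of_le hle
    have hint2 : IntervalIntegrable (fun w => (g.eval w)⁻¹) volume x w₀ := by
      apply ContinuousOn.intervalIntegrable
      rw [huIcc]
      exact ContinuousOn.inv₀ (by fun_prop) hgne
    have hint1 : IntervalIntegrable (fun w => (C * (w - l))⁻¹) volume x w₀ := by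
      apply ContinuousOn.intervalIntegrable
      rw [huIcc]
      refine ContinuousOn.inv₀ (by fun_prop) ?_
      intro w hw
      have : 0 < w - l := sub_pos.2 (lt_of_lt_of_le hx.1 hw.1)
      positivity
    have hmono : ∫ w in x..w₀, (C * (w - l))⁻¹ ≤ ∫ w in x..w₀, (g.eval w)⁻¹ := by
      apply intervalIntegral.integral_mono_on hle hint1 hint2
      intro w hw
      have hwIoo := hsub hw
      have h0 : 0 < g.eval w := hgpos w hwIoo
      have hb : g.eval w ≤ C * (w - l) := hboundl w ⟨hwIoo.1.le, hwIoo.2.le⟩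
      exact inv_anti₀ h0 hb
    have hcalc : ∫ w in x..w₀, (C * (w - l))⁻¹
        = C⁻¹ * (Real.log (w₀ - l) - Real.log (x - l)) := by
      have e : ∀ w : ℝ, (C * (w - l))⁻¹ = C⁻¹ * (w - l)⁻¹ := fun w => by
        rw [mul_inv]
      simp only [e]
      rw [intervalIntegral.integral_const_mul]
      have hcomp : ∫ w in x..w₀, (w - l)⁻¹ = ∫ u in (x - l)..(w₀ - l), u⁻¹ :=
        intervalIntegral.integral_comp_sub_right (fun u => u⁻¹) l
      rw [hcomp, integral_inv]
      · rw [Real.log_div (by linarith [hw₀.1] : w₀ - l ≠ 0) (by linarith [hx.1] : x - l ≠ 0)]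
      · intro h
        rw [Set.uIcc_of_le (by linarith [hx.1] : x - l ≤ w₀ - l)] at h
        have := h.1
        linarith [hx.1]
    have hsymm : (∫ w in w₀..x, (g.eval w)⁻¹) = -∫ w in x..w₀, (g.eval w)⁻¹ :=
      intervalIntegral.integral_symm x w₀
    rw [hsymm]
    linarith [hmono, hcalc.symm.le]
  exact ⟨part1, part2, part3, part4⟩
end
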